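/- Let r and k be positive integers, let n_1, …, n_k ∈ ℤ^r be pairwise distinct vectors, and let Λ be an additive submonoid of ℤ^r such that the subgroup of ℤ^r generated by Λ has rank r. Then there exists m ∈ Λ such that the integers s_i := n_i ⋅ m (for i = 1, …, k) are pairwise distinct, where n ⋅ m denotes the standard dot product Σ_{a=1}^r n(a) m(a). -/

import Mathlib

/-!
A linear functional on `ℤ^r` that vanishes on `Λ` has a kernel of full rank, so its image
has rank zero and the functional is zero; hence each difference `n i - n j` pairs nonzero
with some element of `Λ`. Finitely many such witnesses are merged one at a time: if `f m ≠ 0`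
for the functionals handled so far and `f' m' ≠ 0` for a new one, then `m + t • m'` works
for all of them once `t` exceeds every `|f m|`.
-/

open Finset Matrix Module

theorem Int.add_mul_ne_zero_of_natAbs_lt {a b : ℤ} {t : ℕ} (ha : a.natAbs < t) (hb : b ≠ 0) :
    a + t * b ≠ 0 := by
  intro h
  have hat : a.natAbs = t * b.natAbs := by
    rw [eq_neg_of_add_eq_zero_left h, Int.natAbs_neg, Int.natAbs_mul, Int.natAbs_natCast]
  have hb' : 0 < b.natAbs := Int.natAbs_pos.2 hb
  nlinarith

theorem AddSubmonoid.exists_mem_forall_ne_zero {ι M : Type*} [AddCommMonoid M]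
    (Λ : AddSubmonoid M) (f : ι → M →+ ℤ) (s : Finset ι)
    (h : ∀ i ∈ s, ∃ m ∈ Λ, f i m ≠ 0) : ∃ m ∈ Λ, ∀ i ∈ s, f i m ≠ 0 := by
  classical
  induction s using Finset.induction_on with
  | empty => exact ⟨0, Λ.zero_mem, by simp⟩
  | insert i s _ ih =>
    obtain ⟨m, hm, hms⟩ := ih fun j hj => h j (mem_insert_of_mem hj)
    obtain ⟨m', hm', hm'i⟩ := h i (mem_insert_self i s)
    set t := 1 + ∑ j ∈ insert i s, (f j m).natAbs
    refine ⟨m + t • m', Λ.add_mem hm (Λ.nsmul_mem hm' t), fun j hj => ?_⟩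
    rw [map_add, map_nsmul, nsmul_eq_mul]
    by_cases hj' : f j m' = 0
    · rw [hj', mul_zero, add_zero]
      rcases mem_insert.1 hj with rfl | hj
      · exact absurd hj' hm'i
      · exact hms j hj
    · refine Int.add_mul_ne_zero_of_natAbs_lt ?_ hj'
      have := single_le_sum (f := fun j => (f j m).natAbs) (fun _ _ => Nat.zero_le _) hj
      omega

theorem LinearMap.eq_zero_of_le_ker_of_finrank_eq {R M P : Type*} [CommRing R] [IsDomain R]
    [IsNoetherianRing R] [AddCommGroup M] [Module R M] [Module.Finite R M]
    [AddCommGroup P] [Module R P] [IsTorsionFree R P]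
    (N : Submodule R M) (hN : finrank R N = finrank R M)
    (f : M →ₗ[R] P) (hf : N ≤ LinearMap.ker f) : f = 0 := by
  have hker : finrank R (LinearMap.ker f) = finrank R M :=
    le_antisymm (Submodule.finrank_le _) (hN ▸ Submodule.finrank_mono hf)
  have hrange : finrank R (LinearMap.range f) = 0 := by
    have := (LinearMap.ker f).finrank_quotient_add_finrank
    rw [f.quotKerEquivRange.finrank_eq] at this
    omega
  exact LinearMap.range_eq_bot.1 (Submodule.subsingleton_iff_eq_bot.1 (finrank_zero_iff.1 hrange))

theorem exists_mem_dotProduct_ne_zero {R ι : Type*} [CommRing R] [IsDomain R] [IsNoetherianRing R]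
    [Fintype ι] [DecidableEq ι] (s : Set (ι → R))
    (hs : finrank R (Submodule.span R s) = Fintype.card ι)
    {v : ι → R} (hv : v ≠ 0) : ∃ m ∈ s, v ⬝ᵥ m ≠ 0 := by
  by_contra! h
  have hzero := (dotProductBilin R R v).eq_zero_of_le_ker_of_finrank_eq _
    (by rwa [finrank_fintype_fun_eq_card]) (Submodule.span_le.2 h)
  obtain ⟨a, ha⟩ := Function.ne_iff.1 hv
  exact ha (by simpa using LinearMap.congr_fun hzero (Pi.single a 1))

theorem exists_separating_vector_general
    (r k : ℕ)
    (n : Fin k → (Fin r → ℤ)) (hn : Function.Injective n)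
    (Λ : AddSubmonoid (Fin r → ℤ))
    (hΛ : Module.finrank ℤ (Submodule.span ℤ (Λ : Set (Fin r → ℤ))) = r) :
    ∃ m ∈ Λ, ∀ i j : Fin k, i ≠ j →
      (∑ a, n i a * m a) ≠ (∑ a, n j a * m a) := by
  let f (p : Fin k × Fin k) : (Fin r → ℤ) →+ ℤ :=
    (dotProductBilin ℤ ℤ (n p.1 - n p.2)).toAddMonoidHom
  have hwitness (p) (hp : p ∈ (univ : Finset (Fin k)).offDiag) : ∃ m ∈ Λ, f p m ≠ 0 :=
    exists_mem_dotProduct_ne_zero (Λ : Set (Fin r → ℤ)) (by rwa [Fintype.card_fin])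
      (sub_ne_zero.2 (hn.ne (mem_offDiag.1 hp).2.2))
  obtain ⟨m, hm, hsep⟩ := Λ.exists_mem_forall_ne_zero f _ hwitness
  refine ⟨m, hm, fun i j hij heq => hsep (i, j) (by simpa using hij) ?_⟩
  change (n i - n j) ⬝ᵥ m = 0
  rw [sub_dotProduct, sub_eq_zero]
  exact heq

/-- Given pairwise distinct vectors `n₁,…,n_k ∈ ℤ^r` and an additive
submonoid `Λ ⊆ ℤ^r` whose generated subgroup has rank `r`, there is `m ∈ Λ` such that
the dot products `n_i ⋅ m` are pairwise distinct. -/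
theorem exists_separating_vector
    (r k : ℕ) (hr : 0 < r) (hk : 0 < k)
    (n : Fin k → (Fin r → ℤ)) (hn : Function.Injective n)
    (Λ : AddSubmonoid (Fin r → ℤ))
    (hΛ : Module.finrank ℤ (Submodule.span ℤ (Λ : Set (Fin r → ℤ))) = r) :
    ∃ m ∈ Λ, ∀ i j : Fin k, i ≠ j →
      (∑ a, n i a * m a) ≠ (∑ a, n j a * m a) :=
  exists_separating_vector_general r k n hn Λ hΛ
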